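/- Let S be a faithfully flat Ohm-Rush R-algebra and let W be a multiplicatively closed subset of R. Then for all f ∈ S and w ∈ W, the Ohm-Rush content of f/w in the R_W-algebra S_W equals orc(f)·R_W, the extension of orc(f) to R_W. Moreover, S_W is a faithfully flat Ohm-Rush R_W-algebra. -/

import Mathlib

/-!
If `f/w ∈ J·S_W` for an ideal `J` of `R_W`, let `I` be the contraction of `J` to `R`; clearing
denominators gives `w'f ∈ IS` for some `w' ∈ W`. Flatness turns this into `f ∈ (I :_R w')S`, so
`orc(f) ⊆ (I : w') = I` (as `I` is saturated with respect to `W`) and `orc(f)·R_W ⊆ J`. The reverse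
inclusion comes from `f ∈ orc(f)S`, and together they give the formula, which in turn yields the
Ohm-Rush property of `S_W`. Faithful flatness passes to the base change `S_W ≅ R_W ⊗_R S`.
-/

/-- The Ohm-Rush content of an element `f` of the `R`-algebra `S`:
the intersection of all ideals `I` of `R` such that `f ∈ IS`. -/
def orc (R S : Type*) [CommRing R] [CommRing S] [Algebra R S] (f : S) : Ideal R :=
  sInf {I : Ideal R | f ∈ I.map (algebraMap R S)}

/-- `S` is an Ohm-Rush `R`-algebra if `f ∈ orc(f)·S` for every `f ∈ S`. -/
def IsOhmRushAlgebra (R S : Type*) [CommRing R] [CommRing S] [Algebra R S] : Prop :=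
  ∀ f : S, f ∈ (orc R S f).map (algebraMap R S)

/-- `S` is a content `R`-algebra if it is a faithfully flat Ohm-Rush `R`-algebra
satisfying the Dedekind–Mertens condition. -/
def IsContentAlgebra (R S : Type*) [CommRing R] [CommRing S] [Algebra R S] : Prop :=
  Module.FaithfullyFlat R S ∧ IsOhmRushAlgebra R S ∧
    ∀ f g : S, ∃ n : ℕ, 1 ≤ n ∧
      orc R S f ^ n * orc R S g = orc R S f ^ (n - 1) * orc R S (f * g)

/-- `S` is a semicontent `R`-algebra if it is a faithfully flat Ohm-Rush `R`-algebra and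
for every multiplicatively closed subset `W ⊆ R` and all `f, g ∈ S` with `orc(f)·R_W = R_W`,
one has `orc(fg)·R_W = orc(g)·R_W`. -/
def IsSemicontentAlgebra (R S : Type*) [CommRing R] [CommRing S] [Algebra R S] : Prop :=
  Module.FaithfullyFlat R S ∧ IsOhmRushAlgebra R S ∧
    ∀ (W : Submonoid R) (f g : S),
      (orc R S f).map (algebraMap R (Localization W)) = ⊤ →
      (orc R S (f * g)).map (algebraMap R (Localization W)) =
        (orc R S g).map (algebraMap R (Localization W))

/-- `S` is a weak content `R`-algebra if it is an Ohm-Rush `R`-algebra and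
`orc(f)·orc(g) ⊆ √(orc(fg))` for all `f, g ∈ S`. -/
def IsWeakContentAlgebra (R S : Type*) [CommRing R] [CommRing S] [Algebra R S] : Prop :=
  IsOhmRushAlgebra R S ∧
    ∀ f g : S, orc R S f * orc R S g ≤ (orc R S (f * g)).radical

/-- `S` is a Gaussian `R`-algebra if it is an Ohm-Rush `R`-algebra and
`orc(fg) = orc(f)·orc(g)` for all `f, g ∈ S`. -/
def IsGaussianAlgebra (R S : Type*) [CommRing R] [CommRing S] [Algebra R S] : Prop :=
  IsOhmRushAlgebra R S ∧ ∀ f g : S, orc R S (f * g) = orc R S f * orc R S g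

open TensorProduct

section Flat

variable {R S : Type*} [CommRing R] [CommRing S] [Algebra R S]

lemma TensorProduct.tmul_mk_one_eq_zero_iff (I : Ideal R) (s : S) :
    s ⊗ₜ[R] Ideal.Quotient.mk I 1 = 0 ↔ s ∈ I.map (algebraMap R S) := by
  rw [← (tensorQuotEquivQuotSMul S I).map_eq_zero_iff, tensorQuotEquivQuotSMul_tmul_mk, one_smul,
    Submodule.Quotient.mk_eq_zero, Ideal.smul_top_eq_map, Submodule.restrictScalars_mem]

lemma Ideal.mem_map_colon_singleton_of_flat [Module.Flat R S] {I : Ideal R} {r : R} {s : S}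
    (h : algebraMap R S r * s ∈ I.map (algebraMap R S)) :
    s ∈ (I.colon {r}).map (algebraMap R S) := by
  have hker : I.colon {r} = LinearMap.ker (I.mkQ ∘ₗ LinearMap.mulRight R r) := by
    ext a
    exact Submodule.mem_colon_singleton.trans (Submodule.Quotient.mk_eq_zero I).symm
  -- multiplication by `r` embeds `R ⧸ (I : r)` into `R ⧸ I`, and `S ⊗[R] R ⧸ I ≅ S ⧸ IS`
  let φ : (R ⧸ I.colon {r}) →ₗ[R] R ⧸ I := (I.colon {r}).liftQ _ hker.le
  have hφ : Function.Injective φ :=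
    LinearMap.ker_eq_bot.mp (Submodule.ker_liftQ_eq_bot' _ _ hker)
  rw [← TensorProduct.tmul_mk_one_eq_zero_iff]
  apply Module.Flat.lTensor_preserves_injective_linearMap φ hφ
  rw [LinearMap.lTensor_tmul, map_zero]
  have hφ1 : φ (Ideal.Quotient.mk _ 1) = r • Ideal.Quotient.mk I 1 := by
    rw [Algebra.smul_def, (Ideal.Quotient.mk I).map_one, mul_one]
    exact congrArg _ (one_mul r)
  rw [hφ1, ← TensorProduct.smul_tmul, TensorProduct.tmul_mk_one_eq_zero_iff, Algebra.smul_def]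
  exact h

end Flat

section OhmRush

variable {R S : Type*} [CommRing R] [CommRing S] [Algebra R S]

lemma orc_le_of_mem_map {I : Ideal R} {f : S} (h : f ∈ I.map (algebraMap R S)) : orc R S f ≤ I :=
  sInf_le h

lemma le_orc {J : Ideal R} {f : S} (h : ∀ I : Ideal R, f ∈ I.map (algebraMap R S) → J ≤ I) :
    J ≤ orc R S f :=
  le_sInf h

end OhmRush

section Localization

variable {R S RW SW : Type*} [CommRing R] [CommRing S] [Algebra R S]
  [CommRing RW] [CommRing SW] [Algebra R RW] [Algebra S SW] [Algebra R SW] [IsScalarTower R S SW]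
  [Algebra RW SW] [IsScalarTower R RW SW]

variable (S) in
lemma Ideal.map_map_algebraMap_comm (I : Ideal R) :
    (I.map (algebraMap R RW)).map (algebraMap RW SW) =
      (I.map (algebraMap R S)).map (algebraMap S SW) := by
  rw [Ideal.map_map, Ideal.map_map, ← IsScalarTower.algebraMap_eq, ← IsScalarTower.algebraMap_eq]

section

variable {W : Submonoid R} [IsLocalization (W.map (algebraMap R S)) SW]

lemma mk'_mem_map_map_of_mem_map {I : Ideal R} {f : S} (hf : f ∈ I.map (algebraMap R S))
    (m : W.map (algebraMap R S)) :
    IsLocalization.mk' SW f m ∈ (I.map (algebraMap R RW)).map (algebraMap RW SW) := by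
  rw [Ideal.map_map_algebraMap_comm S, IsLocalization.mk'_eq_mul_mk'_one]
  exact Ideal.mul_mem_right _ _ (Ideal.mem_map_of_mem _ hf)

variable [IsLocalization W RW]

lemma map_orc_le_of_mk'_mem_map [Module.Flat R S] {f : S} {m : W.map (algebraMap R S)}
    {J : Ideal RW} (h : IsLocalization.mk' SW f m ∈ J.map (algebraMap RW SW)) :
    (orc R S f).map (algebraMap R RW) ≤ J := by
  rw [← IsLocalization.map_under W RW J, Ideal.map_map_algebraMap_comm S,
    IsLocalization.mk'_mem_map_algebraMap_iff] at h
  obtain ⟨_, ⟨w, hw, rfl⟩, hwf⟩ := h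
  have hcolon : (J.under R).colon {w} ≤ J.under R := fun x hx => by
    have hxw : algebraMap R RW x * algebraMap R RW w ∈ J := by
      simpa [← map_mul] using Submodule.mem_colon_singleton.mp hx
    exact (Ideal.mul_unit_mem_iff_mem J (IsLocalization.map_units RW ⟨w, hw⟩)).mp hxw
  rw [Ideal.map_le_iff_le_comap]
  exact (orc_le_of_mem_map (Ideal.mem_map_colon_singleton_of_flat hwf)).trans hcolon

theorem orc_mk' [Module.Flat R S] (hor : IsOhmRushAlgebra R S) (f : S)
    (m : W.map (algebraMap R S)) :
    orc RW SW (IsLocalization.mk' SW f m) = (orc R S f).map (algebraMap R RW) :=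
  le_antisymm (orc_le_of_mem_map (mk'_mem_map_map_of_mem_map (hor f) m))
    (le_orc fun _ => map_orc_le_of_mk'_mem_map)

end

variable (RW SW)

theorem IsOhmRushAlgebra.localization [Module.Flat R S] (hor : IsOhmRushAlgebra R S)
    (W : Submonoid R) [IsLocalization W RW] [IsLocalization (W.map (algebraMap R S)) SW] :
    IsOhmRushAlgebra RW SW := by
  intro g
  obtain ⟨⟨f, m⟩, rfl⟩ := IsLocalization.mk'_surjective (W.map (algebraMap R S)) g
  rw [orc_mk' hor]
  exact mk'_mem_map_map_of_mem_map (hor f) m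

theorem Module.FaithfullyFlat.localization [Module.FaithfullyFlat R S] (W : Submonoid R)
    [IsLocalization W RW] [IsLocalization (W.map (algebraMap R S)) SW] :
    Module.FaithfullyFlat RW SW := by
  have : IsLocalization (Algebra.algebraMapSubmonoid S W) SW :=
    ‹IsLocalization (W.map (algebraMap R S)) SW›
  exact .of_linearEquiv _ _
    (IsLocalizedModule.isBaseChange W RW (IsScalarTower.toAlgHom R S SW).toLinearMap).equiv.symm

end Localization

/-- If `S` is a faithfully flat Ohm-Rush `R`-algebra and `W` is a multiplicatively closed
subset of `R`, then for all `f ∈ S` and `w ∈ W`, `orc_{S_W/R_W}(f/w) = orc_{S/R}(f)·R_W`;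
moreover `S_W` is a faithfully flat Ohm-Rush `R_W`-algebra. -/
theorem orc_localization_formula (R S : Type*) [CommRing R] [CommRing S] [Algebra R S]
    (hff : Module.FaithfullyFlat R S) (hor : IsOhmRushAlgebra R S)
    (W : Submonoid R)
    (RW SW : Type*) [CommRing RW] [CommRing SW]
    [Algebra R RW] [IsLocalization W RW]
    [Algebra S SW] [IsLocalization (W.map (algebraMap R S)) SW]
    [Algebra R SW] [IsScalarTower R S SW]
    [Algebra RW SW] [IsScalarTower R RW SW] :
    (∀ (f : S) (w : W),
      orc RW SW
          (IsLocalization.mk' SW f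
            ⟨algebraMap R S w, Submonoid.mem_map_of_mem (algebraMap R S) w.2⟩) =
        (orc R S f).map (algebraMap R RW)) ∧
    Module.FaithfullyFlat RW SW ∧ IsOhmRushAlgebra RW SW :=
  ⟨fun f _ => orc_mk' hor f _, .localization (S := S) RW SW W, hor.localization RW SW W⟩
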